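/- arXiv:2308.13071 — 2 statements merged into one kernel-verified Lean document; each statement's English description precedes it below -/
import Mathlib

section
/- Let A : H → H be a bounded normal operator and S = {x_1,…,x_N} a finite subset of H such that the iterative system {A^n x_i : n ≥ 0, 1 ≤ i ≤ N} (with all terms nonzero) is a frame for H. Then ‖A^n x_i‖ → 0 as n → ∞ for every i, and consequently the normalized system {A^n x_i/‖A^n x_i‖} is not a Bessel sequence (hence not a frame) for H, provided H is infinite-dimensional. -/
/-!
By normality `‖Aⁿv‖ = ‖(A*)ⁿv‖`. Shifting the frame sum at `z` by `m` levels gives the frame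
sum at `(A*)ᵐz`, so the lower frame bound makes `α‖(A*)ᵐz‖²` at most the `m`-th tail of a
convergent series; hence `(A*)ᵐz → 0` and `‖Aⁿxᵢ‖ → 0`.

If the normalized system had a Bessel bound `B`, pick `c > 0` with `cB < α`. Only finitely many
vectors of the frame have `‖yₚ‖² > c`; take `z ≠ 0` orthogonal to them, which is possible in
infinite dimension. Then `α‖z‖² ≤ ∑ ‖yₚ‖² |⟪z, yₚ/‖yₚ‖⟫|² ≤ cB‖z‖²`, a contradiction.
-/

open scoped ComplexInnerProductSpace ENNReal
open Filter Topology

noncomputable section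

variable {E : Type*} [NormedAddCommGroup E] [InnerProductSpace ℂ E]

/-- `y` is a Bessel sequence with Bessel bound `B`:
`∑ᵢ |⟪z, yᵢ⟫|² ≤ B‖z‖²` for all `z` (sum taken in `ℝ≥0∞` so that divergence is handled). -/
def BesselWith {ι : Type*} (y : ι → E) (B : ℝ) : Prop :=
  ∀ z : E, ∑' i, ENNReal.ofReal (‖⟪z, y i⟫‖ ^ 2) ≤ ENNReal.ofReal (B * ‖z‖ ^ 2)

/-- `y` satisfies the lower frame condition with bound `A`:
`A‖z‖² ≤ ∑ᵢ |⟪z, yᵢ⟫|²` for all `z`. -/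
def LowerFrameWith {ι : Type*} (y : ι → E) (A : ℝ) : Prop :=
  ∀ z : E, ENNReal.ofReal (A * ‖z‖ ^ 2) ≤ ∑' i, ENNReal.ofReal (‖⟪z, y i⟫‖ ^ 2)

/-- `y` is a frame with frame bounds `A ≤ B`. -/
def FrameWith {ι : Type*} (y : ι → E) (A B : ℝ) : Prop :=
  0 < A ∧ A ≤ B ∧ LowerFrameWith y A ∧ BesselWith y B

/-- The normalized sequence `yᵢ/‖yᵢ‖`. -/
def normalizeSeq {ι : Type*} (y : ι → E) : ι → E := fun i => (‖y i‖ : ℂ)⁻¹ • y i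

open ContinuousLinearMap

instance IsStarNormal.pow {R : Type*} [Monoid R] [StarMul R] {x : R} [IsStarNormal x] (n : ℕ) :
    IsStarNormal (x ^ n) :=
  ⟨by rw [star_pow]; exact IsStarNormal.star_comm_self.pow_pow n n⟩

theorem tendsto_cofinite_prod_of_forall {α ι X : Type*} [Finite ι] {f : α × ι → X}
    {l : Filter X} (h : ∀ i, Tendsto (fun a => f (a, i)) cofinite l) :
    Tendsto f cofinite l := by
  intro s hs
  refine (Set.finite_iUnion fun i => (h i hs).image fun a => (a, i)).subset ?_
  rintro ⟨a, i⟩ hp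
  exact Set.mem_iUnion.2 ⟨i, a, hp, rfl⟩

theorem exists_ne_zero_forall_inner_eq_zero {𝕜 F : Type*} [RCLike 𝕜] [NormedAddCommGroup F]
    [InnerProductSpace 𝕜 F] (hinf : ¬ FiniteDimensional 𝕜 F) {s : Set F} (hs : s.Finite) :
    ∃ z ≠ 0, ∀ v ∈ s, inner 𝕜 z v = 0 := by
  set K := Submodule.span 𝕜 s
  have : FiniteDimensional 𝕜 K := FiniteDimensional.span_of_finite 𝕜 hs
  have hK : Kᗮ ≠ ⊥ := fun hbot => hinf <| by
    have htop : K = ⊤ := Submodule.orthogonal_eq_bot_iff.mp hbot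
    exact Module.Finite.equiv ((LinearEquiv.ofEq _ _ htop).trans Submodule.topEquiv)
  obtain ⟨z, hzK, hz0⟩ := Submodule.exists_mem_ne_zero_of_ne_bot hK
  exact ⟨z, hz0, fun v hv => Submodule.inner_left_of_mem_orthogonal
    (Submodule.subset_span hv) hzK⟩

theorem norm_inner_normalizeSeq {ι : Type*} (y : ι → E) (z : E) (i : ι) :
    ‖⟪z, normalizeSeq y i⟫‖ = ‖y i‖⁻¹ * ‖⟪z, y i⟫‖ := by
  rw [normalizeSeq, inner_smul_right, norm_mul, norm_inv, Complex.norm_real, norm_norm]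

theorem LowerFrameWith.not_besselWith_normalizeSeq {ι : Type*} {y : ι → E} {α : ℝ}
    (hy : LowerFrameWith y α) (hα : 0 < α) (hinf : ¬ FiniteDimensional ℂ E)
    (hnz : ∀ i, y i ≠ 0) (hlim : Tendsto (fun i => ‖y i‖) cofinite (𝓝 0)) (B : ℝ) :
    ¬ BesselWith (normalizeSeq y) B := by
  intro hB
  set c := α / (|B| + 1)
  have hc : 0 < c := by positivity
  have hcB : c * B < α := by
    calc c * B ≤ c * |B| := mul_le_mul_of_nonneg_left (le_abs_self B) hc.le
      _ < c * (|B| + 1) := by gcongr; linarith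
      _ = α := div_mul_cancel₀ α (by positivity)
  have hsmall : ∀ᶠ i in cofinite, ‖y i‖ ^ 2 ≤ c := by
    simpa using ((hlim.pow 2).eventually_le_const (by simpa using hc))
  obtain ⟨z, hz0, hz⟩ := exists_ne_zero_forall_inner_eq_zero hinf (hsmall.image y)
  have hterm : ∀ i, ENNReal.ofReal (‖⟪z, y i⟫‖ ^ 2) ≤
      ENNReal.ofReal c * ENNReal.ofReal (‖⟪z, normalizeSeq y i⟫‖ ^ 2) := fun i => by
    by_cases hi : ‖y i‖ ^ 2 ≤ c
    · rw [← ENNReal.ofReal_mul hc.le, norm_inner_normalizeSeq, mul_pow, ← mul_assoc]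
      refine ENNReal.ofReal_le_ofReal (le_mul_of_one_le_left (by positivity) ?_)
      rw [inv_pow, ← div_eq_mul_inv, one_le_div (pow_pos (norm_pos_iff.2 (hnz i)) 2)]
      exact hi
    · rw [hz (y i) ⟨i, hi, rfl⟩]
      simp
  have hlow : ENNReal.ofReal (α * ‖z‖ ^ 2) ≤ ENNReal.ofReal (c * B * ‖z‖ ^ 2) :=
    calc ENNReal.ofReal (α * ‖z‖ ^ 2) ≤ ∑' i, ENNReal.ofReal (‖⟪z, y i⟫‖ ^ 2) := hy z
      _ ≤ ∑' i, ENNReal.ofReal c * ENNReal.ofReal (‖⟪z, normalizeSeq y i⟫‖ ^ 2) :=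
        ENNReal.tsum_le_tsum hterm
      _ = ENNReal.ofReal c * ∑' i, ENNReal.ofReal (‖⟪z, normalizeSeq y i⟫‖ ^ 2) :=
        ENNReal.tsum_mul_left
      _ ≤ ENNReal.ofReal c * ENNReal.ofReal (B * ‖z‖ ^ 2) := mul_le_mul_right (hB z) _
      _ = ENNReal.ofReal (c * B * ‖z‖ ^ 2) := by rw [← ENNReal.ofReal_mul hc.le, mul_assoc]
  have hz2 : 0 < ‖z‖ ^ 2 := by positivity
  rcases ENNReal.ofReal_le_ofReal_iff'.1 hlow with h | h
  · exact hcB.not_ge (le_of_mul_le_mul_right h hz2)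
  · exact (mul_pos hα hz2).not_ge h

section Iterates

variable [CompleteSpace E] (A : E →L[ℂ] E) {ι : Type*} (x : ι → E)

theorem ContinuousLinearMap.adjoint_pow (n : ℕ) : adjoint (A ^ n) = adjoint A ^ n := by
  rw [← star_eq_adjoint, star_pow, star_eq_adjoint]

theorem inner_pow_apply_eq_inner_adjoint_pow_apply (n : ℕ) (z w : E) :
    ⟪z, (A ^ n) w⟫ = ⟪(adjoint A ^ n) z, w⟫ := by
  rw [← adjoint_pow, adjoint_inner_left]

theorem IsStarNormal.norm_pow_apply [IsStarNormal A] (n : ℕ) (v : E) :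
    ‖(A ^ n) v‖ = ‖(adjoint A ^ n) v‖ := by
  rw [isStarNormal_iff_norm_eq_adjoint.1 (IsStarNormal.pow n) v, adjoint_pow]

theorem tsum_norm_inner_pow_add_apply (z : E) (m : ℕ) :
    ∑' n, ∑' i, ENNReal.ofReal (‖⟪z, (A ^ (n + m)) (x i)⟫‖ ^ 2) =
      ∑' p : ℕ × ι, ENNReal.ofReal (‖⟪(adjoint A ^ m) z, (A ^ p.1) (x p.2)⟫‖ ^ 2) := by
  rw [ENNReal.tsum_prod']
  congr! 5 with n i
  rw [add_comm, pow_add, mul_apply_eq_comp, inner_pow_apply_eq_inner_adjoint_pow_apply]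

variable {A x} in
theorem LowerFrameWith.tendsto_norm_adjoint_pow_apply {α β : ℝ}
    (hlow : LowerFrameWith (fun p : ℕ × ι => (A ^ p.1) (x p.2)) α) (hα : 0 < α)
    (hup : BesselWith (fun p : ℕ × ι => (A ^ p.1) (x p.2)) β) (z : E) :
    Tendsto (fun m => ‖(adjoint A ^ m) z‖) atTop (𝓝 0) := by
  set t : ℕ → ℝ≥0∞ := fun n => ∑' i, ENNReal.ofReal (‖⟪z, (A ^ n) (x i)⟫‖ ^ 2)
  have ht : ∑' n, t n ≠ ∞ := by
    rw [← ENNReal.tsum_prod' (f := fun p : ℕ × ι => ENNReal.ofReal (‖⟪z, (A ^ p.1) (x p.2)⟫‖ ^ 2))]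
    exact ne_top_of_le_ne_top ENNReal.ofReal_ne_top (hup z)
  have htail : ∀ m, ∑' n, t (n + m) ≠ ∞ := fun m =>
    ne_top_of_le_ne_top ht (ENNReal.tsum_comp_le_tsum_of_injective (add_left_injective m) t)
  have hbound : ∀ m, ‖(adjoint A ^ m) z‖ ≤ √((∑' n, t (n + m)).toReal / α) := fun m => by
    rw [Real.le_sqrt (norm_nonneg _) (by positivity), le_div_iff₀' hα,
      ← ENNReal.ofReal_le_iff_le_toReal (htail m), tsum_norm_inner_pow_add_apply]
    exact hlow _
  have hlim : Tendsto (fun m => √((∑' n, t (n + m)).toReal / α)) atTop (𝓝 0) := by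
    simpa using (((ENNReal.tendsto_toReal ENNReal.zero_ne_top).comp
      (ENNReal.tendsto_sum_nat_add t ht)).div_const α).sqrt
  exact squeeze_zero (fun _ => norm_nonneg _) hbound hlim

end Iterates

/-- If `A` is normal, `S = {x₁,…,x_N}` finite, and the iterative system
`{Aⁿxᵢ}` (all nonzero) is a frame for the infinite-dimensional space `H`, then
`‖Aⁿxᵢ‖ → 0` for each `i` and the normalized system is not a Bessel sequence
(hence not a frame). -/
theorem stmt18 {H : Type*} [NormedAddCommGroup H] [InnerProductSpace ℂ H] [CompleteSpace H]
    (hinf : ¬ FiniteDimensional ℂ H)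
    (A : H →L[ℂ] H)
    (hnormal : (ContinuousLinearMap.adjoint A).comp A = A.comp (ContinuousLinearMap.adjoint A))
    (N : ℕ) (x : Fin N → H)
    (hnz : ∀ (n : ℕ) (i : Fin N), (A ^ n) (x i) ≠ 0)
    (hframe : ∃ A' B' : ℝ, FrameWith (fun p : ℕ × Fin N => (A ^ p.1) (x p.2)) A' B') :
    (∀ i : Fin N, Tendsto (fun n : ℕ => ‖(A ^ n) (x i)‖) atTop (𝓝 0)) ∧
      ¬ ∃ B : ℝ, BesselWith (normalizeSeq (fun p : ℕ × Fin N => (A ^ p.1) (x p.2))) B := by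
  obtain ⟨α, β, hα, -, hlow, hup⟩ := hframe
  have : IsStarNormal A := ⟨hnormal⟩
  have hdecay (i : Fin N) : Tendsto (fun n => ‖(A ^ n) (x i)‖) atTop (𝓝 0) := by
    simpa only [← IsStarNormal.norm_pow_apply]
      using hlow.tendsto_norm_adjoint_pow_apply hα hup (x i)
  refine ⟨hdecay, fun ⟨B, hB⟩ => hlow.not_besselWith_normalizeSeq hα hinf (fun p => hnz p.1 p.2)
    ?_ B hB⟩
  exact tendsto_cofinite_prod_of_forall fun i => Nat.cofinite_eq_atTop ▸ hdecay i
end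
end

section
/- Let A : H → H be a compact operator and x ∈ H with A^n x ≠ 0 for all n ≥ 0. If the normalized sequence {A^n x/‖A^n x‖}_{n≥0} is a Bessel sequence in H, then ‖A^n x‖ → 0 as n → ∞. Consequently, if there exists C > 0 with ‖A^n x‖ ≥ C for all n, then {A^n x/‖A^n x‖} is not a Bessel sequence. -/
open scoped ComplexInnerProductSpace ENNReal
open Filter Topology

noncomputable section

variable {E : Type*} [NormedAddCommGroup E] [InnerProductSpace ℂ E]

/-! The unit vectors `eₙ = Aⁿx/‖Aⁿx‖` are square-summable against every vector, hence weakly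
null, and a compact operator turns weakly null bounded sequences into norm-null ones. Thus
`‖A eₙ‖ = ‖Aⁿ⁺¹x‖/‖Aⁿx‖ → 0`, so `∑ Aⁿx` converges by the ratio test and `‖Aⁿx‖ → 0`. -/

theorem BesselWith.tendsto_inner_cofinite_zero {ι : Type*} {y : ι → E} {B : ℝ}
    (hy : BesselWith y B) (z : E) : Tendsto (fun i => ⟪z, y i⟫) cofinite (𝓝 0) := by
  have hsum : Summable fun i => ‖⟪z, y i⟫‖ ^ 2 := by
    have := ENNReal.summable_toReal (ne_top_of_le_ne_top ENNReal.ofReal_ne_top (hy z))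
    simpa only [ENNReal.toReal_ofReal (sq_nonneg _)] using this
  rw [tendsto_zero_iff_norm_tendsto_zero]
  simpa using hsum.tendsto_cofinite_zero.sqrt

/- Every subsequence has a convergent sub-subsequence, and its limit `p` is orthogonal to
every vector, `p` itself included. -/
theorem tendsto_zero_of_isCompact_of_tendsto_inner_zero {𝕜 F : Type*} [RCLike 𝕜]
    [NormedAddCommGroup F] [InnerProductSpace 𝕜 F] {K : Set F} (hK : IsCompact K)
    {v : ℕ → F} (hvK : ∀ n, v n ∈ K)
    (hv : ∀ z, Tendsto (fun n => inner 𝕜 z (v n)) atTop (𝓝 0)) :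
    Tendsto v atTop (𝓝 0) := by
  refine tendsto_of_subseq_tendsto fun ns hns => ?_
  obtain ⟨p, -, φ, hφ, hp⟩ := hK.tendsto_subseq fun k => hvK (ns k)
  suffices p = 0 from ⟨φ, this ▸ hp⟩
  have hpp : Tendsto (fun k => inner 𝕜 p (v (ns (φ k)))) atTop (𝓝 (inner 𝕜 p p)) :=
    tendsto_const_nhds.inner hp
  rw [← inner_self_eq_zero (𝕜 := 𝕜)]
  exact tendsto_nhds_unique hpp ((hv p).comp (hns.comp hφ.tendsto_atTop))

theorem IsCompactOperator.tendsto_zero_of_tendsto_inner_zero {𝕜 F G : Type*} [RCLike 𝕜]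
    [NormedAddCommGroup F] [InnerProductSpace 𝕜 F] [CompleteSpace F]
    [NormedAddCommGroup G] [InnerProductSpace 𝕜 G] [CompleteSpace G]
    {A : F →L[𝕜] G} (hA : IsCompactOperator A) {u : ℕ → F}
    (hu : Bornology.IsBounded (Set.range u))
    (hw : ∀ z, Tendsto (fun n => inner 𝕜 z (u n)) atTop (𝓝 0)) :
    Tendsto (fun n => A (u n)) atTop (𝓝 0) := by
  obtain ⟨K, hK, hAK⟩ :=
    IsCompactOperator.image_subset_compact_of_bounded (f := (A : F →ₗ[𝕜] G)) hA hu
  refine tendsto_zero_of_isCompact_of_tendsto_inner_zero (𝕜 := 𝕜) hK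
    (fun n => hAK ⟨u n, Set.mem_range_self n, rfl⟩) fun z => ?_
  simpa only [ContinuousLinearMap.adjoint_inner_left] using hw (ContinuousLinearMap.adjoint A z)

theorem norm_normalizeSeq_le {ι : Type*} (y : ι → E) (i : ι) : ‖normalizeSeq y i‖ ≤ 1 := by
  rw [normalizeSeq, norm_smul, norm_inv, Complex.norm_real, norm_norm]
  exact inv_mul_le_one_of_le₀ le_rfl (norm_nonneg _)

theorem isBounded_range_normalizeSeq {ι : Type*} (y : ι → E) :
    Bornology.IsBounded (Set.range (normalizeSeq y)) :=
  isBounded_iff_forall_norm_le.2 ⟨1, Set.forall_mem_range.2 (norm_normalizeSeq_le y)⟩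

theorem norm_apply_normalizeSeq {F ι : Type*} [NormedAddCommGroup F] [NormedSpace ℂ F]
    (A : E →L[ℂ] F) (y : ι → E) (i : ι) : ‖A (normalizeSeq y i)‖ = ‖A (y i)‖ / ‖y i‖ := by
  rw [normalizeSeq, map_smul, norm_smul, norm_inv, Complex.norm_real, norm_norm, inv_mul_eq_div]

/-- For a compact operator `A` and `x` with all `Aⁿx ≠ 0`: if the normalized
orbit `{Aⁿx/‖Aⁿx‖}` is a Bessel sequence then `‖Aⁿx‖ → 0`; consequently, if `‖Aⁿx‖ ≥ C > 0`
for all `n`, the normalized orbit is not a Bessel sequence. -/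
theorem stmt19 {H : Type*} [NormedAddCommGroup H] [InnerProductSpace ℂ H] [CompleteSpace H]
    (A : H →L[ℂ] H) (hcomp : IsCompactOperator ⇑A)
    (x : H) (hnz : ∀ n : ℕ, (A ^ n) x ≠ 0) :
    ((∃ B : ℝ, BesselWith (normalizeSeq (fun n : ℕ => (A ^ n) x)) B) →
      Tendsto (fun n : ℕ => ‖(A ^ n) x‖) atTop (𝓝 0)) ∧
    (∀ C : ℝ, 0 < C → (∀ n : ℕ, C ≤ ‖(A ^ n) x‖) →
      ¬ ∃ B : ℝ, BesselWith (normalizeSeq (fun n : ℕ => (A ^ n) x)) B) := by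
  have tendsto_of_bessel : (∃ B : ℝ, BesselWith (normalizeSeq (fun n : ℕ => (A ^ n) x)) B) →
      Tendsto (fun n : ℕ => ‖(A ^ n) x‖) atTop (𝓝 0) := by
    rintro ⟨B, hB⟩
    have hAe := hcomp.tendsto_zero_of_tendsto_inner_zero (isBounded_range_normalizeSeq _)
      fun z => Nat.cofinite_eq_atTop ▸ hB.tendsto_inner_cofinite_zero z
    have hratio : Tendsto (fun n => ‖(A ^ (n + 1)) x‖ / ‖(A ^ n) x‖) atTop (𝓝 0) := by
      simpa [norm_apply_normalizeSeq, pow_succ'] using hAe.norm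
    have hsum := summable_of_ratio_test_tendsto_lt_one one_pos (.of_forall hnz) hratio
    simpa using hsum.tendsto_atTop_zero.norm
  refine ⟨tendsto_of_bessel, fun C hC hCle hB => ?_⟩
  exact hC.not_ge (ge_of_tendsto (tendsto_of_bessel hB) (.of_forall hCle))
end
end
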